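/- Let N ≥ 3. For integers p ≥ q ≥ r ≥ 0 with p ≥ N−2, the three-variable Schur polynomial π_{p,q,r}(x,y,z) lies in the ideal of ℚ[x,y,z] generated by the complete homogeneous symmetric polynomials h_{N−2}, h_{N−1} and h_N in the variables x, y, z. (This is the dot conversion relation for triple facets of sl(N) foams.) -/

import Mathlib

/-!
Put `h_k = 0` for `k < 0`. The generating function `1 / ((1 - x t)(1 - y t)(1 - z t))` of the
`h_k` gives `h_j = e₁ h_{j-1} - e₂ h_{j-2} + e₃ h_{j-3}` for `j ≥ 1`, so every `h_j` with
`j ≥ N - 2` lies in `(h_{N-2}, h_{N-1}, h_N)`. The same recurrence gives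
`x_i ^ n = h_n - s_i h_{n-1} + p_i h_{n-2}`, where `s_i`, `p_i` are the elementary symmetric
functions of the two other variables. Hence the alternant matrix is `C * M`, where
`det C = ±vand3` and `M` is the Jacobi–Trudi matrix up to transposing and reversing rows, so
`S = ±det M`. One column of `M` is `(h_{p+2}, h_{p+1}, h_p)`, which lies in the ideal since
`p ≥ N - 2`; expanding `det M` along it proves the claim.
-/

open MvPolynomial

/-- The Vandermonde determinant in three variables. -/
noncomputable def vand3 : MvPolynomial (Fin 3) ℚ :=
  (X 0 - X 1) * (X 0 - X 2) * (X 1 - X 2)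

/-- The alternant `det(x_i^{λ_j + 3 − j})` for the partition `λ = (p,q,r)`. -/
noncomputable def alternant3 (p q r : ℕ) : MvPolynomial (Fin 3) ℚ :=
  Matrix.det (Matrix.of fun i j : Fin 3 =>
    (X i : MvPolynomial (Fin 3) ℚ) ^ ((![p, q, r] j) + 2 - (j : ℕ)))

/-- The complete homogeneous symmetric polynomial of degree `j` in three variables. -/
noncomputable def hpoly3 (j : ℕ) : MvPolynomial (Fin 3) ℚ :=
  ∑ p ∈ Finset.HasAntidiagonal.antidiagonal j, ∑ q ∈ Finset.HasAntidiagonal.antidiagonal p.2,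
    X 0 ^ p.1 * X 1 ^ q.1 * X 2 ^ q.2

open Finset

namespace LinearRecurrence

variable {R : Type*} [CommSemiring R] {E : LinearRecurrence R} {u : ℕ → R}

theorem IsSolution.mem_span_of_le (hu : E.IsSolution u) {m j : ℕ} (hj : m ≤ j) :
    u j ∈ Ideal.span (u '' Set.Ico m (m + E.order)) := by
  induction j using Nat.strong_induction_on with
  | _ j ih =>
    by_cases hlt : j < m + E.order
    · exact Ideal.subset_span ⟨j, ⟨hj, hlt⟩, rfl⟩
    · obtain ⟨n, rfl⟩ : ∃ n, j = n + E.order := ⟨j - E.order, by omega⟩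
      rw [hu n]
      exact Ideal.sum_mem _ fun i _ ↦
        Ideal.mul_mem_left _ _ (ih _ (by omega) (by omega))

end LinearRecurrence

theorem Matrix.det_mem_of_forall_mem_col {R : Type*} [CommRing R] {n : ℕ}
    (A : Matrix (Fin (n + 1)) (Fin (n + 1)) R) (I : Ideal R) (j : Fin (n + 1))
    (h : ∀ i, A i j ∈ I) : A.det ∈ I := by
  rw [Matrix.det_succ_column A j]
  exact Ideal.sum_mem _ fun i _ ↦ Ideal.mul_mem_right _ _ (Ideal.mul_mem_left _ _ (h i))

section ZeroExtend

variable {R : Type*} [Zero R]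

def zeroExtend (f : ℕ → R) (j : ℤ) : R :=
  if 0 ≤ j then f j.toNat else 0

@[simp]
theorem zeroExtend_natCast (f : ℕ → R) (n : ℕ) : zeroExtend f n = f n := by
  simp [zeroExtend]

theorem zeroExtend_of_neg (f : ℕ → R) {j : ℤ} (hj : j < 0) : zeroExtend f j = 0 := by
  simp [zeroExtend, hj.not_ge]

end ZeroExtend

section GeomConv

variable {R : Type*} [CommSemiring R]

/-- The coefficients of `F(t) / (1 - x t)`, where `F` is the generating function of `f`. -/
def geomConv (x : R) (f : ℕ → R) (n : ℕ) : R :=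
  ∑ ab ∈ antidiagonal n, x ^ ab.1 * f ab.2

theorem geomConv_zero (x : R) (f : ℕ → R) : geomConv x f 0 = f 0 := by
  simp [geomConv]

theorem geomConv_succ (x : R) (f : ℕ → R) (n : ℕ) :
    geomConv x f (n + 1) = x * geomConv x f n + f (n + 1) := by
  rw [geomConv, Nat.antidiagonal_succ, sum_cons, sum_map, geomConv, mul_sum, add_comm]
  congr 1
  · exact sum_congr rfl fun _ _ ↦ by simp [pow_succ', mul_assoc]
  · simp

theorem zeroExtend_geomConv (x : R) (f : ℕ → R) (j : ℤ) :
    zeroExtend (geomConv x f) j = x * zeroExtend (geomConv x f) (j - 1) + zeroExtend f j := by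
  rcases lt_trichotomy j 0 with hj | rfl | hj
  · simp [zeroExtend_of_neg, hj, show j - 1 < 0 by omega]
  · simp [zeroExtend, geomConv_zero]
  · obtain ⟨n, rfl⟩ : ∃ n : ℕ, j = n + 1 := ⟨j.toNat - 1, by omega⟩
    rw [add_sub_cancel_right, ← Nat.cast_succ]
    simp only [zeroExtend_natCast, geomConv_succ]

theorem zeroExtend_pow (x : R) {j : ℤ} (hj : j ≠ 0) :
    zeroExtend (x ^ ·) j = x * zeroExtend (x ^ ·) (j - 1) := by
  rcases hj.lt_or_gt with hj | hj
  · simp [zeroExtend_of_neg, hj, show j - 1 < 0 by omega]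
  · obtain ⟨n, rfl⟩ : ∃ n : ℕ, j = n + 1 := ⟨j.toNat - 1, by omega⟩
    rw [add_sub_cancel_right, ← Nat.cast_succ]
    simp only [zeroExtend_natCast, pow_succ, mul_comm]

end GeomConv

section Complete

variable {R : Type*} [CommRing R]

def complete3 (x y z : R) : ℕ → R :=
  geomConv x (geomConv y (z ^ ·))

theorem complete3_zero (x y z : R) : complete3 x y z 0 = 1 := by
  simp [complete3, geomConv_zero]

theorem zeroExtend_complete3_rec (x y z : R) {j : ℤ} (hj : 1 ≤ j) :
    zeroExtend (complete3 x y z) j =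
      (x + y + z) * zeroExtend (complete3 x y z) (j - 1)
        - (x * y + x * z + y * z) * zeroExtend (complete3 x y z) (j - 2)
        + x * y * z * zeroExtend (complete3 x y z) (j - 3) := by
  have h₀ := zeroExtend_geomConv x (geomConv y (z ^ ·)) j
  have h₁ := zeroExtend_geomConv x (geomConv y (z ^ ·)) (j - 1)
  have h₂ := zeroExtend_geomConv x (geomConv y (z ^ ·)) (j - 2)
  have g₀ := zeroExtend_geomConv y (z ^ ·) j
  have g₁ := zeroExtend_geomConv y (z ^ ·) (j - 1)
  have w₀ := zeroExtend_pow z (j := j) (by omega)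
  rw [sub_sub, one_add_one_eq_two] at h₁ g₁
  rw [sub_sub, two_add_one_eq_three] at h₂
  unfold complete3
  linear_combination h₀ - (y + z) * h₁ + y * z * h₂ + g₀ - z * g₁ + w₀

theorem complete3_isSolution (x y z : R) :
    (LinearRecurrence.mk 3 ![x * y * z, -(x * y + x * z + y * z), x + y + z]).IsSolution
      (complete3 x y z) := by
  intro n
  have h := zeroExtend_complete3_rec x y z (j := (n + 3 : ℕ)) (by omega)
  rw [show ((n + 3 : ℕ) : ℤ) - 1 = (n + 2 : ℕ) by push_cast; ring,
    show ((n + 3 : ℕ) : ℤ) - 2 = (n + 1 : ℕ) by push_cast; ring,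
    show ((n + 3 : ℕ) : ℤ) - 3 = n by push_cast; ring] at h
  simp only [zeroExtend_natCast] at h
  simp only [Fin.sum_univ_three, Matrix.cons_val_zero, Matrix.cons_val_one, Matrix.cons_val_two,
    Matrix.head_cons, Matrix.tail_cons, Fin.val_zero, Fin.val_one, Fin.val_two, add_zero]
  linear_combination h

theorem pow_eq_zeroExtend_complete3 {x y z a : R} (ha : (a - x) * (a - y) * (a - z) = 0)
    (n : ℕ) :
    a ^ n = zeroExtend (complete3 x y z) n
      - (x + y + z - a) * zeroExtend (complete3 x y z) (n - 1)
      + (x * y + x * z + y * z - a * (x + y + z - a)) * zeroExtend (complete3 x y z) (n - 2) := by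
  induction n with
  | zero => simp [zeroExtend, complete3_zero]
  | succ n ih =>
    have h := zeroExtend_complete3_rec x y z (j := n + 1) (by omega)
    rw [add_sub_cancel_right, show (n : ℤ) + 1 - 2 = n - 1 by ring,
      show (n : ℤ) + 1 - 3 = n - 2 by ring] at h
    push_cast
    rw [add_sub_cancel_right, show (n : ℤ) + 1 - 2 = n - 1 by ring]
    linear_combination a * ih - h + zeroExtend (complete3 x y z) (n - 2) * ha

end Complete

section Alternant

variable {R : Type*} [CommRing R]

/-- Row `i` is `(1, -s, p)` with `s`, `p` the sum and product of the two entries of `v` other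
than `v i`. -/
def powCoeffMatrix (v : Fin 3 → R) : Matrix (Fin 3) (Fin 3) R :=
  Matrix.of fun i ↦ ![1, -(v 0 + v 1 + v 2 - v i),
    v 0 * v 1 + v 0 * v 2 + v 1 * v 2 - v i * (v 0 + v 1 + v 2 - v i)]

theorem det_powCoeffMatrix (v : Fin 3 → R) :
    (powCoeffMatrix v).det = (v 1 - v 0) * (v 2 - v 0) * (v 2 - v 1) := by
  simp only [Matrix.det_fin_three, powCoeffMatrix, Matrix.of_apply, Matrix.cons_val]
  ring

/-- With `e = λ + (2, 1, 0)` this is the Jacobi–Trudi matrix `(h (λ i + j - i))` transposed,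
with its rows in reverse order. -/
def jacobiTrudiMatrix (h : ℤ → R) (e : Fin 3 → ℕ) : Matrix (Fin 3) (Fin 3) R :=
  Matrix.of fun k j ↦ h (e j - k)

theorem det_alternant_eq_mul (v : Fin 3 → R) (e : Fin 3 → ℕ) :
    (Matrix.of fun i j ↦ v i ^ e j).det = (powCoeffMatrix v).det *
      (jacobiTrudiMatrix (zeroExtend (complete3 (v 0) (v 1) (v 2))) e).det := by
  rw [← Matrix.det_mul]
  congr 1
  ext i j
  have hroot : (v i - v 0) * (v i - v 1) * (v i - v 2) = 0 := by fin_cases i <;> simp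
  rw [Matrix.of_apply, pow_eq_zeroExtend_complete3 hroot, Matrix.mul_apply, Fin.sum_univ_three]
  simp only [powCoeffMatrix, jacobiTrudiMatrix, Matrix.of_apply, Matrix.cons_val, Fin.val_zero,
    Fin.val_one, Fin.val_two, Nat.cast_zero, Nat.cast_one, Nat.cast_ofNat, sub_zero]
  ring

end Alternant

theorem hpoly3_eq_complete3 (n : ℕ) : hpoly3 n = complete3 (X 0) (X 1) (X 2) n := by
  simp [hpoly3, complete3, geomConv, mul_sum, mul_assoc]

theorem vand3_ne_zero : vand3 ≠ 0 := by
  intro h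
  have h2 := congrArg (eval ![(2 : ℚ), 1, 0]) h
  norm_num [vand3, Matrix.cons_val_two] at h2

theorem hpoly3_mem_span {N j : ℕ} (hN : 2 ≤ N) (hj : N - 2 ≤ j) :
    hpoly3 j ∈ Ideal.span {hpoly3 (N - 2), hpoly3 (N - 1), hpoly3 N} := by
  obtain ⟨m, rfl⟩ : ∃ m, N = m + 2 := ⟨N - 2, by omega⟩
  have hspan : complete3 (X 0) (X 1) (X 2) '' Set.Ico m (m + 3) ⊆
      {hpoly3 m, hpoly3 (m + 1), hpoly3 (m + 2)} := by
    rintro _ ⟨i, hi, rfl⟩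
    obtain rfl | rfl | rfl : i = m ∨ i = m + 1 ∨ i = m + 2 := by rcases hi with ⟨h₁, h₂⟩; omega
    all_goals simp [hpoly3_eq_complete3]
  simpa [hpoly3_eq_complete3] using
    Ideal.span_mono hspan ((complete3_isSolution _ _ _).mem_span_of_le (by omega : m ≤ j))

theorem schur3_mem_ideal_general (N : ℕ) (hN : 3 ≤ N) (p q r : ℕ) (hp : N - 2 ≤ p)
    (S : MvPolynomial (Fin 3) ℚ) (hS : vand3 * S = alternant3 p q r) :
    S ∈ Ideal.span {hpoly3 (N - 2), hpoly3 (N - 1), hpoly3 N} := by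
  set M := jacobiTrudiMatrix (zeroExtend (complete3 (X 0 : MvPolynomial (Fin 3) ℚ) (X 1) (X 2)))
    fun j : Fin 3 ↦ ![p, q, r] j + 2 - (j : ℕ)
  have hSM : S = -M.det := by
    refine mul_left_cancel₀ vand3_ne_zero ?_
    rw [hS, alternant3, det_alternant_eq_mul, det_powCoeffMatrix, vand3]
    ring
  rw [hSM]
  refine neg_mem (M.det_mem_of_forall_mem_col _ 0 fun k ↦ ?_)
  have hk : M k 0 = hpoly3 (p + 2 - k) := by
    rw [hpoly3_eq_complete3, ← zeroExtend_natCast (complete3 _ _ _), Nat.cast_sub (by omega)]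
    simp [M, jacobiTrudiMatrix]
  rw [hk]
  exact hpoly3_mem_span (by omega) (by omega)

/-- Dot conversion for triple facets: for `N ≥ 3` and `p ≥ q ≥ r ≥ 0` with
`p ≥ N−2`, the Schur polynomial `π_{p,q,r}` (defined implicitly as the
alternant-over-Vandermonde ratio) lies in the ideal `(h_{N−2}, h_{N−1}, h_N)`. -/
theorem schur3_mem_ideal (N : ℕ) (hN : 3 ≤ N) (p q r : ℕ)
    (hpq : q ≤ p) (hqr : r ≤ q) (hp : N - 2 ≤ p)
    (S : MvPolynomial (Fin 3) ℚ) (hS : vand3 * S = alternant3 p q r) :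
    S ∈ Ideal.span {hpoly3 (N - 2), hpoly3 (N - 1), hpoly3 N} :=
  schur3_mem_ideal_general N hN p q r hp S hS
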